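/- arXiv:2603.28900 — 2 statements merged into one kernel-verified Lean document; each statement's English description precedes it below -/
import Mathlib

section
/- Let V : ℝⁿ → ℝ be differentiable with L-Lipschitz gradient, let S ∈ ℝⁿ, and let κ ∈ ℝⁿ with κᵢ ≥ 0. Let Ω(S) = {Ξ ∈ ℝⁿ : |Ξᵢ − Sᵢ| ≤ κᵢ for all i}. Then the exact worst-case value satisfies |inf_{Ξ ∈ Ω(S)} V(Ξ) − (V(S) − ∑ᵢ κᵢ·|∂V/∂xᵢ(S)|)| ≤ (L/2)·‖κ‖₂². -/
/-!
Taylor's theorem with an `L`-Lipschitz derivative gives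
`|V (S + v) - V S - V'(S) v| ≤ L/2 ‖v‖²`, and on the box `‖v‖ ≤ ‖κ‖`. So up to this error the
infimum of `V` over the box is that of the linear part `V'(S) v = ∑ᵢ vᵢ ∂ᵢV(S)`, whose minimum
`-∑ᵢ κᵢ |∂ᵢV(S)|` is attained at the corner `vᵢ = -κᵢ sign ∂ᵢV(S)`.
-/

open Set

theorem norm_image_sub_sub_fderiv_le_of_lipschitz_fderiv
    {E F : Type*} [NormedAddCommGroup E] [NormedSpace ℝ E] [NormedAddCommGroup F]
    [NormedSpace ℝ F] {V : E → F} {L : ℝ} (hdiff : Differentiable ℝ V)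
    (hlip : ∀ x y, ‖fderiv ℝ V x - fderiv ℝ V y‖ ≤ L * ‖x - y‖) (x v : E) :
    ‖V (x + v) - V x - fderiv ℝ V x v‖ ≤ L / 2 * ‖v‖ ^ 2 := by
  let f : ℝ → F := fun t => V (x + t • v) - V x - t • fderiv ℝ V x v
  have hf : ∀ t, HasDerivAt f (fderiv ℝ V (x + t • v) v - fderiv ℝ V x v) t := fun t => by
    have hline : HasDerivAt (fun t : ℝ => x + t • v) v t := by
      simpa using ((hasDerivAt_id t).smul_const v).const_add x
    have := (((hdiff _).hasFDerivAt.comp_hasDerivAt t hline).sub_const (V x)).sub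
      ((hasDerivAt_id t).smul_const (fderiv ℝ V x v))
    rwa [one_smul] at this
  have hB (t : ℝ) : HasDerivAt (fun t : ℝ => L / 2 * ‖v‖ ^ 2 * t ^ 2) (L * ‖v‖ ^ 2 * t) t :=
    ((hasDerivAt_pow 2 t).const_mul (L / 2 * ‖v‖ ^ 2)).congr_deriv (by push_cast; ring)
  have bound : ∀ t ∈ Ico (0 : ℝ) 1,
      ‖fderiv ℝ V (x + t • v) v - fderiv ℝ V x v‖ ≤ L * ‖v‖ ^ 2 * t := by
    rintro t ⟨ht, -⟩
    calc ‖fderiv ℝ V (x + t • v) v - fderiv ℝ V x v‖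
        ≤ ‖fderiv ℝ V (x + t • v) - fderiv ℝ V x‖ * ‖v‖ :=
          (fderiv ℝ V (x + t • v) - fderiv ℝ V x).le_opNorm v
      _ ≤ L * ‖t • v‖ * ‖v‖ := by
          gcongr
          simpa using hlip (x + t • v) x
      _ = L * ‖v‖ ^ 2 * t := by rw [norm_smul, Real.norm_of_nonneg ht]; ring
  -- `f 0 = 0` and `‖f'‖` is dominated by the derivative of the barrier `L/2 ‖v‖² t²`.
  have := image_norm_le_of_norm_deriv_right_le_deriv_boundary
    (fun t _ => (hf t).continuousAt.continuousWithinAt) (fun t _ => (hf t).hasDerivWithinAt)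
    (by simp [f]) hB bound (right_mem_Icc.2 zero_le_one)
  simpa [f] using this

namespace EuclideanSpace

variable {ι : Type*} [Fintype ι]

theorem norm_le_norm_of_abs_le {w κ : EuclideanSpace ℝ ι} (h : ∀ i, |w i| ≤ κ i) : ‖w‖ ≤ ‖κ‖ := by
  rw [norm_eq, norm_eq]
  gcongr with i
  exact (h i).trans (le_abs_self _)

variable [DecidableEq ι] {G : Type*} [FunLike G (EuclideanSpace ℝ ι) ℝ]
  [LinearMapClass G ℝ (EuclideanSpace ℝ ι) ℝ] (ℓ : G) {κ : EuclideanSpace ℝ ι}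

theorem map_eq_sum_mul_map_single (w : EuclideanSpace ℝ ι) :
    ℓ w = ∑ i, w i * ℓ (single i 1) := by
  conv_lhs => rw [← (basisFun ι ℝ).sum_repr w]
  simp [map_sum, smul_eq_mul]

theorem neg_sum_mul_abs_le_of_abs_le {w : EuclideanSpace ℝ ι} (h : ∀ i, |w i| ≤ κ i) :
    -∑ i, κ i * |ℓ (single i 1)| ≤ ℓ w := by
  rw [map_eq_sum_mul_map_single ℓ w, ← Finset.sum_neg_distrib]
  gcongr with i
  calc -(κ i * |ℓ (single i 1)|) ≤ -|w i * ℓ (single i 1)| := by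
        rw [abs_mul]; gcongr; exact h i
    _ ≤ w i * ℓ (single i 1) := neg_abs_le _

theorem exists_abs_le_eq_neg_sum_mul_abs (hκ : ∀ i, 0 ≤ κ i) :
    ∃ w : EuclideanSpace ℝ ι, (∀ i, |w i| ≤ κ i) ∧ ℓ w = -∑ i, κ i * |ℓ (single i 1)| := by
  refine ⟨WithLp.toLp 2 fun i => -(κ i * SignType.sign (ℓ (single i 1))), fun i => ?_, ?_⟩
  · simp only [abs_neg, abs_mul, abs_of_nonneg (hκ i)]
    refine mul_le_of_le_one_right (hκ i) ?_
    rcases SignType.sign (ℓ (single i 1)) with _ | _ | _ <;> simp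
  · rw [map_eq_sum_mul_map_single ℓ, ← Finset.sum_neg_distrib]
    simp only [neg_mul, mul_assoc, sign_mul_self]

end EuclideanSpace

theorem abs_sInf_image_sub_le {α : Type*} {f : α → ℝ} {s : Set α} {c B : ℝ}
    (hlow : ∀ y ∈ s, c - B ≤ f y) (hup : ∃ y ∈ s, f y ≤ c + B) : |sInf (f '' s) - c| ≤ B := by
  obtain ⟨y, hy, hfy⟩ := hup
  have hbdd : BddBelow (f '' s) := ⟨c - B, forall_mem_image.2 hlow⟩
  rw [abs_le]
  constructor
  · linarith [le_csInf ⟨f y, mem_image_of_mem f hy⟩ (forall_mem_image.2 hlow)]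
  · linarith [csInf_le hbdd (mem_image_of_mem f hy)]

/-- Theorem 2: the first-order approximation of the worst-case value over the box
Ω(S) = {Ξ : |Ξᵢ − Sᵢ| ≤ κᵢ} has second-order error: the gap between
inf_{Ξ∈Ω(S)} V(Ξ) and V(S) − ∑ᵢ κᵢ|∂V/∂xᵢ(S)| is at most (L/2)‖κ‖₂². -/
theorem stmt_3 (n : ℕ) (V : EuclideanSpace ℝ (Fin n) → ℝ) (L : ℝ) (hL : 0 ≤ L)
    (hdiff : Differentiable ℝ V)
    (hlip : ∀ x y, ‖fderiv ℝ V x - fderiv ℝ V y‖ ≤ L * ‖x - y‖)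
    (S κ : EuclideanSpace ℝ (Fin n)) (hκ : ∀ i, 0 ≤ κ i) :
    |sInf (V '' {Ξ : EuclideanSpace ℝ (Fin n) | ∀ i, |Ξ i - S i| ≤ κ i}) -
        (V S - ∑ i, κ i * |fderiv ℝ V S (EuclideanSpace.single i 1)|)| ≤
      L / 2 * ‖κ‖ ^ 2 := by
  have taylor (v : EuclideanSpace ℝ (Fin n)) :=
    abs_le.1 (norm_image_sub_sub_fderiv_le_of_lipschitz_fderiv hdiff hlip S v)
  refine abs_sInf_image_sub_le (fun Ξ hΞ => ?_) ?_
  · have hv : ∀ i, |(Ξ - S) i| ≤ κ i := hΞ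
    have hsq : L / 2 * ‖Ξ - S‖ ^ 2 ≤ L / 2 * ‖κ‖ ^ 2 := by
      gcongr; exact EuclideanSpace.norm_le_norm_of_abs_le hv
    have hΞ_taylor := (taylor (Ξ - S)).1
    rw [add_sub_cancel] at hΞ_taylor
    linarith [EuclideanSpace.neg_sum_mul_abs_le_of_abs_le (fderiv ℝ V S) hv]
  · obtain ⟨w, hw, hℓw⟩ := EuclideanSpace.exists_abs_le_eq_neg_sum_mul_abs (fderiv ℝ V S) hκ
    refine ⟨S + w, fun i => by simpa using hw i, ?_⟩
    have hsq : L / 2 * ‖w‖ ^ 2 ≤ L / 2 * ‖κ‖ ^ 2 := by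
      gcongr; exact EuclideanSpace.norm_le_norm_of_abs_le hw
    linarith [(taylor w).2]
end

section
/- Let V : ℝⁿ → ℝ be differentiable with L-Lipschitz gradient, S ∈ ℝⁿ, κ ∈ ℝⁿ nonnegative, and Ω(S) the box {Ξ : |Ξᵢ − Sᵢ| ≤ κᵢ}. Then inf_{Ξ ∈ Ω(S)} V(Ξ) ≤ V(S) − ∑ᵢ κᵢ·|∂V/∂xᵢ(S)| + (L/2)·‖κ‖₂². -/
/-!
Move from `S` to the corner of the box lying against the sign pattern of `∇V(S)`: the linear
term of `V` then drops by exactly `∑ᵢ κᵢ |∂ᵢV(S)|`, the displacement has length `‖κ‖`, and the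
descent lemma bounds the remaining error by `(L/2)‖κ‖²`.
-/

theorem Differentiable.apply_le_add_fderiv_add_sq_norm {E : Type*} [NormedAddCommGroup E]
    [NormedSpace ℝ E] {f : E → ℝ} {L : ℝ} (hf : Differentiable ℝ f)
    (hlip : ∀ x y, ‖fderiv ℝ f x - fderiv ℝ f y‖ ≤ L * ‖x - y‖) (x y : E) :
    f y ≤ f x + fderiv ℝ f x (y - x) + L / 2 * ‖y - x‖ ^ 2 := by
  set d := y - x
  -- `g 1 ≤ g 0` is the claim, and `g` is antitone on `[0, ∞)` by the Lipschitz bound.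
  set g : ℝ → ℝ := fun t ↦ f (x + t • d) - t * fderiv ℝ f x d - L / 2 * t ^ 2 * ‖d‖ ^ 2
  have hg : ∀ t, HasDerivAt g (fderiv ℝ f (x + t • d) d - fderiv ℝ f x d - L * t * ‖d‖ ^ 2) t := by
    intro t
    have hline : HasDerivAt (fun t : ℝ ↦ x + t • d) d t := by
      simpa using ((hasDerivAt_id t).smul_const d).const_add x
    refine ((((hf _).hasFDerivAt.comp_hasDerivAt t hline).sub
      ((hasDerivAt_id t).mul_const (fderiv ℝ f x d))).sub
      (((hasDerivAt_pow 2 t).const_mul (L / 2)).mul_const (‖d‖ ^ 2))).congr_deriv ?_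
    simp only [one_mul, Nat.cast_ofNat, Nat.add_one_sub_one, pow_one]
    ring
  have hg_nonpos : ∀ t ∈ interior (Set.Ici (0 : ℝ)),
      fderiv ℝ f (x + t • d) d - fderiv ℝ f x d - L * t * ‖d‖ ^ 2 ≤ 0 := by
    intro t ht
    rw [interior_Ici, Set.mem_Ioi] at ht
    rw [sub_nonpos]
    calc fderiv ℝ f (x + t • d) d - fderiv ℝ f x d
        = (fderiv ℝ f (x + t • d) - fderiv ℝ f x) d := rfl
      _ ≤ ‖fderiv ℝ f (x + t • d) - fderiv ℝ f x‖ * ‖d‖ :=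
        (le_abs_self _).trans ((fderiv ℝ f (x + t • d) - fderiv ℝ f x).le_opNorm d)
      _ ≤ L * ‖(x + t • d) - x‖ * ‖d‖ := by gcongr; exact hlip _ _
      _ = L * t * ‖d‖ ^ 2 := by
        rw [add_sub_cancel_left, norm_smul, Real.norm_of_nonneg ht.le]
        ring
  have hg_le := antitoneOn_of_hasDerivWithinAt_nonpos (convex_Ici 0)
    (fun t _ ↦ (hg t).continuousAt.continuousWithinAt) (fun t _ ↦ (hg t).hasDerivWithinAt)
    hg_nonpos Set.self_mem_Ici (zero_le_one' ℝ) zero_le_one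
  simp only [g, d, zero_smul, add_zero, zero_mul, sub_zero, one_smul, one_mul, one_pow, ne_eq,
    OfNat.ofNat_ne_zero, not_false_eq_true, zero_pow, mul_zero, mul_one, add_sub_cancel]
    at hg_le
  linarith

namespace EuclideanSpace

theorem isCompact_setOf_abs_sub_le {ι : Type*} (S κ : EuclideanSpace ℝ ι) :
    IsCompact {Ξ : EuclideanSpace ℝ ι | ∀ i, |Ξ i - S i| ≤ κ i} := by
  have hbox : {Ξ : EuclideanSpace ℝ ι | ∀ i, |Ξ i - S i| ≤ κ i} =
      WithLp.ofLp ⁻¹' Set.Icc (S.ofLp - κ.ofLp) (S.ofLp + κ.ofLp) := by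
    ext Ξ
    simp only [Set.mem_ofPred_eq, Set.mem_preimage, Set.mem_Icc, Pi.le_def, Pi.add_apply,
      abs_sub_le_iff, forall_and, sub_le_comm, sub_le_iff_le_add']
    exact and_comm
  rw [hbox]
  exact (PiLp.homeomorph 2 _).isCompact_preimage.2 isCompact_Icc

theorem norm_eq_of_abs_apply_eq {ι : Type*} [Fintype ι] {x y : EuclideanSpace ℝ ι}
    (h : ∀ i, |x i| = |y i|) : ‖x‖ = ‖y‖ := by
  simp only [EuclideanSpace.norm_eq, Real.norm_eq_abs, h]

variable {ι : Type*} [DecidableEq ι]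

/-- The displacement `-κ ⊙ sign (∇ℓ)`, with `sign 0 = 1` so that every coordinate moves by the
full `|κᵢ|`. -/
noncomputable def signCorner (ℓ : EuclideanSpace ℝ ι →L[ℝ] ℝ) (κ : EuclideanSpace ℝ ι) :
    EuclideanSpace ℝ ι :=
  WithLp.toLp 2 fun i ↦ if 0 ≤ ℓ (single i 1) then -κ i else κ i

theorem signCorner_apply (ℓ : EuclideanSpace ℝ ι →L[ℝ] ℝ) (κ : EuclideanSpace ℝ ι) (i : ι) :
    signCorner ℓ κ i = if 0 ≤ ℓ (single i 1) then -κ i else κ i :=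
  rfl

theorem abs_signCorner_apply (ℓ : EuclideanSpace ℝ ι →L[ℝ] ℝ) (κ : EuclideanSpace ℝ ι) (i : ι) :
    |signCorner ℓ κ i| = |κ i| := by
  rw [signCorner_apply]
  split_ifs <;> simp

theorem norm_signCorner [Fintype ι] (ℓ : EuclideanSpace ℝ ι →L[ℝ] ℝ) (κ : EuclideanSpace ℝ ι) :
    ‖signCorner ℓ κ‖ = ‖κ‖ :=
  norm_eq_of_abs_apply_eq (abs_signCorner_apply ℓ κ)

theorem apply_signCorner [Fintype ι] (ℓ : EuclideanSpace ℝ ι →L[ℝ] ℝ) (κ : EuclideanSpace ℝ ι) :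
    ℓ (signCorner ℓ κ) = -∑ i, κ i * |ℓ (single i 1)| := by
  conv_lhs => rw [← (basisFun ι ℝ).sum_repr (signCorner ℓ κ)]
  simp only [map_sum, map_smul, basisFun_repr, basisFun_apply, smul_eq_mul,
    ← Finset.sum_neg_distrib]
  refine Finset.sum_congr rfl fun i _ ↦ ?_
  rw [signCorner_apply]
  split_ifs with h
  · rw [abs_of_nonneg h]; ring
  · rw [abs_of_neg (not_le.mp h)]; ring

end EuclideanSpace

theorem stmt_5_general (n : ℕ) (V : EuclideanSpace ℝ (Fin n) → ℝ) (L : ℝ)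
    (hdiff : Differentiable ℝ V)
    (hlip : ∀ x y, ‖fderiv ℝ V x - fderiv ℝ V y‖ ≤ L * ‖x - y‖)
    (S κ : EuclideanSpace ℝ (Fin n)) (hκ : ∀ i, 0 ≤ κ i) :
    sInf (V '' {Ξ : EuclideanSpace ℝ (Fin n) | ∀ i, |Ξ i - S i| ≤ κ i}) ≤
      V S - ∑ i, κ i * |fderiv ℝ V S (EuclideanSpace.single i 1)| + L / 2 * ‖κ‖ ^ 2 := by
  set δ := EuclideanSpace.signCorner (fderiv ℝ V S) κ
  have hmem : S + δ ∈ {Ξ : EuclideanSpace ℝ (Fin n) | ∀ i, |Ξ i - S i| ≤ κ i} := fun i ↦ by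
    simp [δ, EuclideanSpace.abs_signCorner_apply, abs_of_nonneg (hκ i)]
  have hbdd := (EuclideanSpace.isCompact_setOf_abs_sub_le S κ).image hdiff.continuous
  calc sInf _ ≤ V (S + δ) := csInf_le hbdd.bddBelow ⟨_, hmem, rfl⟩
    _ ≤ V S + fderiv ℝ V S δ + L / 2 * ‖δ‖ ^ 2 := by
        simpa using hdiff.apply_le_add_fderiv_add_sq_norm hlip S (S + δ)
    _ = _ := by rw [EuclideanSpace.apply_signCorner, EuclideanSpace.norm_signCorner]; ring

/-- Upper-bound half of Theorem 2:
inf_{Ξ∈Ω(S)} V(Ξ) ≤ V(S) − ∑ᵢ κᵢ|∂V/∂xᵢ(S)| + (L/2)‖κ‖₂². -/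
theorem stmt_5 (n : ℕ) (V : EuclideanSpace ℝ (Fin n) → ℝ) (L : ℝ) (hL : 0 ≤ L)
    (hdiff : Differentiable ℝ V)
    (hlip : ∀ x y, ‖fderiv ℝ V x - fderiv ℝ V y‖ ≤ L * ‖x - y‖)
    (S κ : EuclideanSpace ℝ (Fin n)) (hκ : ∀ i, 0 ≤ κ i) :
    sInf (V '' {Ξ : EuclideanSpace ℝ (Fin n) | ∀ i, |Ξ i - S i| ≤ κ i}) ≤
      V S - ∑ i, κ i * |fderiv ℝ V S (EuclideanSpace.single i 1)| + L / 2 * ‖κ‖ ^ 2 :=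
  stmt_5_general n V L hdiff hlip S κ hκ
end
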